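/- arXiv:1212.5300 — 9 statements merged into one kernel-verified Lean document; each statement's English description precedes it below -/
import Mathlib

section
/- Let SNR2 ≥ INR ≥ 1, SNR_side ≥ 0, W ≥ 0, λ ∈ [0,1] and λ̄ = 1 − λ. Then (1/(1+W)) · max{0, 1 − W·log₂(1 + λ·SNR_side/W) + log₂( ((1 + λ̄·SNR2)/(1 + λ̄·INR)) · (INR/(INR + SNR2)) )} < 1/(1+W) ≤ 1, where the term W·log₂(1 + λ·SNR_side/W) is taken to equal 0 when W = 0. -/
/-- Normalized uplink rate gap of simplified bin-and-cancel in the weak interference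
regime (`INR ≤ SNR2`, interference at least at noise level `INR ≥ 1`):
`(1/(1+W)) · max{0, 1 − W·log₂(1 + λ·SNR_side/W)
  + log₂(((1 + λ̄·SNR2)/(1 + λ̄·INR)) · (INR/(INR + SNR2)))} < 1/(1+W) ≤ 1`.
(When `W = 0` the side-channel term `W·log₂(1 + λ·SNR_side/W)` equals `0`, which
matches Lean's convention `x / 0 = 0`.) -/
theorem bc_uplink_gap_weak (SNR2 INR SNRside W lam : ℝ)
    (h1 : 1 ≤ INR) (h2 : INR ≤ SNR2) (hside : 0 ≤ SNRside) (hW : 0 ≤ W)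
    (hlam0 : 0 ≤ lam) (hlam1 : lam ≤ 1) :
    (1 / (1 + W)) *
        max 0 (1 - W * Real.logb 2 (1 + lam * SNRside / W) +
          Real.logb 2 (((1 + (1 - lam) * SNR2) / (1 + (1 - lam) * INR)) *
            (INR / (INR + SNR2)))) < 1 / (1 + W) ∧
      1 / (1 + W) ≤ 1 := by
  have hl : 0 ≤ 1 - lam := by linarith
  have hWpos : 0 < 1 + W := by linarith
  constructor
  · have hA : 0 ≤ W * Real.logb 2 (1 + lam * SNRside / W) := by
      apply mul_nonneg hW
      apply Real.logb_nonneg (by norm_num)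
      have : 0 ≤ lam * SNRside / W := by positivity
      linarith
    have hargpos : 0 < ((1 + (1 - lam) * SNR2) / (1 + (1 - lam) * INR)) *
        (INR / (INR + SNR2)) := by
      have h3 : 0 < SNR2 := by linarith
      positivity
    have harglt : ((1 + (1 - lam) * SNR2) / (1 + (1 - lam) * INR)) *
        (INR / (INR + SNR2)) < 1 := by
      have hI : (0:ℝ) < INR := by linarith
      have hprod : 0 ≤ (1 - lam) * (INR * INR) := by positivity
      rw [div_mul_div_comm, div_lt_one (by nlinarith)]
      nlinarith [hprod]
    have hL : Real.logb 2 (((1 + (1 - lam) * SNR2) / (1 + (1 - lam) * INR)) *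
        (INR / (INR + SNR2))) < 0 := Real.logb_neg (by norm_num) hargpos harglt
    have hmax : max 0 (1 - W * Real.logb 2 (1 + lam * SNRside / W) +
        Real.logb 2 (((1 + (1 - lam) * SNR2) / (1 + (1 - lam) * INR)) *
          (INR / (INR + SNR2)))) < 1 := by
      apply max_lt one_pos
      linarith
    calc (1 / (1 + W)) * _ < (1 / (1 + W)) * 1 :=
          mul_lt_mul_of_pos_left hmax (by positivity)
      _ = 1 / (1 + W) := mul_one _
  · rw [div_le_one hWpos]; linarith
end

section
/- Let SNR2 > 0, SNR_side ≥ SNR2 and W ≥ 1. Then log₂(1 + SNR2) − log₂(1 + SNR2·SNR_side/(SNR2 + SNR_side)) = log₂( 1 + SNR2²/(SNR2 + SNR_side + SNR2·SNR_side) ), and the normalized uplink-rate gap of decode-and-cancel satisfies (1/(1+W)) · log₂( 1 + SNR2²/(SNR2 + SNR_side + SNR2·SNR_side) ) ≤ 1/(1+W) ≤ 1/2. -/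
/-- Decode-and-cancel is within half a bit of the uplink capacity when `W ≥ 1` and
`SNR_side ≥ SNR2`:
`log₂(1+SNR2) − log₂(1 + SNR2·SNR_side/(SNR2+SNR_side))
  = log₂(1 + SNR2²/(SNR2 + SNR_side + SNR2·SNR_side))` and
`(1/(1+W)) · log₂(1 + SNR2²/(SNR2 + SNR_side + SNR2·SNR_side)) ≤ 1/(1+W) ≤ 1/2`. -/
theorem dc_uplink_gap (SNR2 SNRside W : ℝ)
    (hS : 0 < SNR2) (hside : SNR2 ≤ SNRside) (hW : 1 ≤ W) :
    Real.logb 2 (1 + SNR2) -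
        Real.logb 2 (1 + SNR2 * SNRside / (SNR2 + SNRside)) =
      Real.logb 2 (1 + SNR2 ^ 2 / (SNR2 + SNRside + SNR2 * SNRside)) ∧
    (1 / (1 + W)) *
        Real.logb 2 (1 + SNR2 ^ 2 / (SNR2 + SNRside + SNR2 * SNRside)) ≤
      1 / (1 + W) ∧
    1 / (1 + W) ≤ 1 / 2 := by
  have hs : 0 < SNRside := lt_of_lt_of_le hS hside
  have hD : 0 < SNR2 + SNRside := by linarith
  have hE : 0 < SNR2 + SNRside + SNR2 * SNRside := by nlinarith
  have hWpos : 0 < 1 + W := by linarith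
  refine ⟨?_, ?_, ?_⟩
  · have h1 : (0:ℝ) < 1 + SNR2 := by linarith
    have h2 : 0 < 1 + SNR2 * SNRside / (SNR2 + SNRside) := by positivity
    rw [← Real.logb_div (ne_of_gt h1) (ne_of_gt h2)]
    congr 1
    field_simp
    ring
  · have hx : SNR2 ^ 2 ≤ SNR2 + SNRside + SNR2 * SNRside := by nlinarith
    have harg : 1 + SNR2 ^ 2 / (SNR2 + SNRside + SNR2 * SNRside) ≤ 2 := by
      have : SNR2 ^ 2 / (SNR2 + SNRside + SNR2 * SNRside) ≤ 1 :=
        (div_le_one hE).mpr hx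
      linarith
    have hlog : Real.logb 2 (1 + SNR2 ^ 2 / (SNR2 + SNRside + SNR2 * SNRside)) ≤ 1 := by
      calc Real.logb 2 (1 + SNR2 ^ 2 / (SNR2 + SNRside + SNR2 * SNRside))
          ≤ Real.logb 2 2 := Real.logb_le_logb_of_le (by norm_num) (by positivity) harg
        _ = 1 := by simp [Real.logb_self_eq_one]
    calc (1 / (1 + W)) * Real.logb 2 (1 + SNR2 ^ 2 / (SNR2 + SNRside + SNR2 * SNRside))
        ≤ (1 / (1 + W)) * 1 := by
          apply mul_le_mul_of_nonneg_left hlog (by positivity)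
      _ = 1 / (1 + W) := by ring
  · rw [div_le_div_iff₀ hWpos (by norm_num)]
    linarith
end

section
/- Let K = √2 − 1. For all real SNR1 ≥ 0, INR ≥ 0, SNR_side ≥ 0 with SNR_side ≥ (1 + 2/(√2 − 1))·(INR − 2), and all W ≥ 1, the normalized downlink-rate gap of estimate-and-cancel satisfies (1/(1+W)) · log₂( 1 + ( SNR1·INR/(1+K)² ) / ( 1 + K²·SNR_side/(1+K)² + INR/(1+K)² + SNR1·(1 + K²·SNR_side/(1+K)²) ) ) ≤ 1/(1+W) ≤ 1/2. -/
/-- Normalized downlink-rate gap of estimate-and-cancel with scaling `K = √2 − 1`: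
when `SNR_side ≥ (1 + 2/(√2 − 1))·(INR − 2)` and `W ≥ 1`,
`(1/(1+W)) · log₂(1 + (SNR1·INR/(1+K)²) / (1 + K²·SNR_side/(1+K)² + INR/(1+K)²
  + SNR1·(1 + K²·SNR_side/(1+K)²))) ≤ 1/(1+W) ≤ 1/2`. -/
theorem ec_downlink_gap (SNR1 INR SNRside W K : ℝ)
    (hK : K = Real.sqrt 2 - 1)
    (hS : 0 ≤ SNR1) (hI : 0 ≤ INR) (hside0 : 0 ≤ SNRside)
    (hside : SNRside ≥ (1 + 2 / (Real.sqrt 2 - 1)) * (INR - 2))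
    (hW : 1 ≤ W) :
    (1 / (1 + W)) *
        Real.logb 2
          (1 + (SNR1 * INR / (1 + K) ^ 2) /
            (1 + K ^ 2 * SNRside / (1 + K) ^ 2 + INR / (1 + K) ^ 2 +
              SNR1 * (1 + K ^ 2 * SNRside / (1 + K) ^ 2))) ≤
      1 / (1 + W) ∧
    1 / (1 + W) ≤ 1 / 2 := by
  subst hK
  have hs0 : (0:ℝ) ≤ Real.sqrt 2 := Real.sqrt_nonneg 2
  have hs2 : Real.sqrt 2 * Real.sqrt 2 = 2 := Real.mul_self_sqrt (by norm_num)
  have hs1 : (1:ℝ) < Real.sqrt 2 := by nlinarith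
  have h1K : (1 + (Real.sqrt 2 - 1)) ^ 2 = 2 := by
    rw [show (1 + (Real.sqrt 2 - 1)) = Real.sqrt 2 by ring]
    nlinarith
  have hK2 : (Real.sqrt 2 - 1) ^ 2 = 3 - 2 * Real.sqrt 2 := by nlinarith
  have hfrac : 1 + 2 / (Real.sqrt 2 - 1) = 3 + 2 * Real.sqrt 2 := by
    have hne : Real.sqrt 2 - 1 ≠ 0 := by nlinarith
    field_simp
    nlinarith
  rw [hfrac] at hside
  rw [h1K, hK2]
  set s := Real.sqrt 2 with hs
  have hK2pos : (0:ℝ) ≤ 3 - 2 * s := by nlinarith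
  have hKS : 0 ≤ (3 - 2 * s) * SNRside := mul_nonneg hK2pos hside0
  have hDpos : 0 < 1 + (3 - 2 * s) * SNRside / 2 + INR / 2 +
      SNR1 * (1 + (3 - 2 * s) * SNRside / 2) := by
    nlinarith [mul_nonneg hS hKS]
  have hnum : SNR1 * INR / 2 ≤ SNR1 * (1 + (3 - 2 * s) * SNRside / 2) := by
    rcases le_or_gt INR 2 with h | h
    · nlinarith [mul_nonneg hS hKS]
    · nlinarith [mul_nonneg hS (mul_nonneg hK2pos (sub_nonneg.2 hside)), hs2]
  have hxnonneg : 0 ≤ SNR1 * INR / 2 /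
      (1 + (3 - 2 * s) * SNRside / 2 + INR / 2 +
        SNR1 * (1 + (3 - 2 * s) * SNRside / 2)) :=
    div_nonneg (by positivity) hDpos.le
  have hx1 : SNR1 * INR / 2 /
      (1 + (3 - 2 * s) * SNRside / 2 + INR / 2 +
        SNR1 * (1 + (3 - 2 * s) * SNRside / 2)) ≤ 1 := by
    rw [div_le_one hDpos]
    nlinarith [hKS]
  have hlog : Real.logb 2
      (1 + SNR1 * INR / 2 /
        (1 + (3 - 2 * s) * SNRside / 2 + INR / 2 +
          SNR1 * (1 + (3 - 2 * s) * SNRside / 2))) ≤ 1 := by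
    have h2 : Real.logb 2 (2:ℝ) = 1 := Real.logb_self_eq_one (by norm_num)
    calc Real.logb 2 _ ≤ Real.logb 2 2 :=
          Real.logb_le_logb_of_le (by norm_num) (by linarith) (by linarith)
      _ = 1 := h2
  have hWpos : (0:ℝ) < 1 + W := by linarith
  constructor
  · have := mul_le_mul_of_nonneg_left hlog (le_of_lt (by positivity : (0:ℝ) < 1 / (1 + W)))
    linarith
  · rw [div_le_div_iff₀ hWpos (by norm_num)]
    linarith
end

section
/- Fix μ ∈ [0,1), W > 0, ν ≥ 0 and λ ∈ (0,1), and set λ̄ = 1 − λ. Then as t → ∞, the ratio min{ log₂(1 + t/2) + log₂(1 + λ̄·t) , log₂( 1 + (t + λ̄·t^μ − 1)/2 ) + log₂(1 + t/t^μ) + W·log₂(1 + λ·t^ν/W) } / log₂(1 + t) converges to min{2, 2 + W·ν − μ}. -/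
/-!
Each rate `logb 2 (1 + SNR-like term)` grows like `a · logb 2 t` where `t ^ a` is the order of
the term inside the logarithm: a function squeezed between `m · t ^ a` and `M · t ^ a` has
logarithm `a · logb t + O(1)`. Reading off the orders, the two branches of the minimum grow like
`1 + 1` and `1 + (1 - μ) + W ν`, while the capacity `logb 2 (1 + t)` grows like `1`.
-/

open Filter Topology Real

theorem tendsto_logb_div_logb_of_rpow_bounds {b a m M : ℝ} {f : ℝ → ℝ} (hb : 1 < b)
    (hm : 0 < m) (hf : ∀ᶠ t in atTop, m * t ^ a ≤ f t ∧ f t ≤ M * t ^ a) :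
    Tendsto (fun t => logb b (f t) / logb b t) atTop (𝓝 a) := by
  have hlim (K : ℝ) : Tendsto (fun t => a + logb b K / logb b t) atTop (𝓝 a) := by
    simpa using ((tendsto_logb_atTop hb).const_div_atTop (logb b K)).const_add a
  have hbounds : ∀ᶠ t in atTop, a + logb b m / logb b t ≤ logb b (f t) / logb b t ∧
      logb b (f t) / logb b t ≤ a + logb b M / logb b t := by
    filter_upwards [hf, eventually_gt_atTop 1] with t ⟨hlow, hupp⟩ ht
    have ht0 : 0 < t := one_pos.trans ht
    have hta : 0 < t ^ a := rpow_pos_of_pos ht0 a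
    have hlogt : 0 < logb b t := logb_pos hb ht
    have hsplit (K : ℝ) (hK : 0 < K) :
        logb b (K * t ^ a) / logb b t = a + logb b K / logb b t := by
      rw [logb_mul hK.ne' hta.ne', logb_rpow_eq_mul_logb_of_pos ht0]
      field_simp
      ring
    have hmt : 0 < m * t ^ a := mul_pos hm hta
    have hM : 0 < M := pos_of_mul_pos_left (hmt.trans_le (hlow.trans hupp)) hta.le
    rw [← hsplit m hm, ← hsplit M hM]
    constructor <;> gcongr
    exact hmt.trans_le hlow
  exact tendsto_of_tendsto_of_tendsto_of_le_of_le' (hlim m) (hlim M)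
    (hbounds.mono fun _ => And.left) (hbounds.mono fun _ => And.right)

theorem tendsto_logb_one_add_mul_rpow_div_logb {b a c : ℝ} (hb : 1 < b) (ha : 0 ≤ a)
    (hc : 0 < c) : Tendsto (fun t => logb b (1 + c * t ^ a) / logb b t) atTop (𝓝 a) := by
  refine tendsto_logb_div_logb_of_rpow_bounds (M := 1 + c) hb hc ?_
  filter_upwards [eventually_ge_atTop 1] with t ht
  have := one_le_rpow ht ha
  constructor <;> nlinarith

theorem tendsto_logb_one_add_mul_div_logb {b c : ℝ} (hb : 1 < b) (hc : 0 < c) :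
    Tendsto (fun t => logb b (1 + c * t) / logb b t) atTop (𝓝 1) := by
  simpa using tendsto_logb_one_add_mul_rpow_div_logb hb zero_le_one hc

theorem tendsto_logb_one_add_div_rpow_div_logb {b μ : ℝ} (hb : 1 < b) (hμ : μ ≤ 1) :
    Tendsto (fun t => logb b (1 + t / t ^ μ) / logb b t) atTop (𝓝 (1 - μ)) := by
  refine (tendsto_logb_one_add_mul_rpow_div_logb hb (sub_nonneg.2 hμ) one_pos).congr' ?_
  filter_upwards [eventually_gt_atTop 0] with t ht
  rw [one_mul, rpow_sub ht, rpow_one]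

theorem tendsto_logb_one_add_add_mul_rpow_div_logb {b μ c : ℝ} (hb : 1 < b) (hμ : μ ≤ 1)
    (hc : 0 ≤ c) :
    Tendsto (fun t => logb b (1 + (t + c * t ^ μ - 1) / 2) / logb b t) atTop (𝓝 1) := by
  refine tendsto_logb_div_logb_of_rpow_bounds (m := 1 / 2) (M := 2 + c) hb one_half_pos ?_
  filter_upwards [eventually_ge_atTop 1] with t ht
  have hle : t ^ μ ≤ t := by simpa using rpow_le_rpow_of_exponent_le ht hμ
  have hnonneg : 0 ≤ t ^ μ := rpow_nonneg (zero_le_one.trans ht) μ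
  rw [rpow_one]
  constructor <;> nlinarith

theorem tendsto_min_div_logb_one_add {b x y : ℝ} {f g : ℝ → ℝ} (hb : 1 < b)
    (hf : Tendsto (fun t => f t / logb b t) atTop (𝓝 x))
    (hg : Tendsto (fun t => g t / logb b t) atTop (𝓝 y)) :
    Tendsto (fun t => min (f t) (g t) / logb b (1 + t)) atTop (𝓝 (min x y)) := by
  have hcap : Tendsto (fun t => logb b (1 + t) / logb b t) atTop (𝓝 1) := by
    simpa using tendsto_logb_one_add_mul_div_logb hb one_pos
  rw [← div_one (min x y)]
  refine ((hf.min hg).div hcap one_ne_zero).congr' ?_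
  filter_upwards [eventually_gt_atTop 1] with t ht
  have hlogt : 0 < logb b t := logb_pos hb ht
  rw [Pi.div_apply, min_div_div_right hlogt.le, div_div_div_cancel_right₀ hlogt.ne']

theorem bc_mux_gain_weak_general (μ ν W lam : ℝ)
    (hμ1 : μ < 1) (hW : 0 < W) (hν : 0 ≤ ν)
    (hlam0 : 0 < lam) (hlam1 : lam < 1) :
    Tendsto
      (fun t : ℝ =>
        min (Real.logb 2 (1 + t / 2) + Real.logb 2 (1 + (1 - lam) * t))
            (Real.logb 2 (1 + (t + (1 - lam) * t ^ μ - 1) / 2) +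
              Real.logb 2 (1 + t / t ^ μ) +
              W * Real.logb 2 (1 + lam * t ^ ν / W)) /
          Real.logb 2 (1 + t))
      atTop (nhds (min 2 (2 + W * ν - μ))) := by
  have hb : (1 : ℝ) < 2 := one_lt_two
  have hc : 0 < 1 - lam := sub_pos.2 hlam1
  have hfirst : Tendsto (fun t => (logb 2 (1 + t / 2) + logb 2 (1 + (1 - lam) * t)) / logb 2 t)
      atTop (𝓝 2) := by
    have h := (tendsto_logb_one_add_mul_div_logb hb (inv_pos.2 two_pos)).add
      (tendsto_logb_one_add_mul_div_logb hb hc)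
    rw [one_add_one_eq_two] at h
    exact h.congr fun t => by rw [add_div, inv_mul_eq_div]
  have hside : Tendsto (fun t => W * logb 2 (1 + lam * t ^ ν / W) / logb 2 t)
      atTop (𝓝 (W * ν)) :=
    ((tendsto_logb_one_add_mul_rpow_div_logb hb hν (div_pos hlam0 hW)).const_mul W).congr
      fun t => by rw [mul_div_right_comm lam, mul_div_assoc]
  have hsecond := ((tendsto_logb_one_add_add_mul_rpow_div_logb hb hμ1.le hc.le).add
    (tendsto_logb_one_add_div_rpow_div_logb hb hμ1.le)).add hside
  rw [show 1 + (1 - μ) + W * ν = 2 + W * ν - μ by ring] at hsecond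
  exact tendsto_min_div_logb_one_add hb hfirst (hsecond.congr fun t => by simp only [add_div])

/-- Asymptotic multiplexing gain of bin-and-cancel in the weak interference
regime: with `SNR = t`, `INR = t^μ`, `SNR_side = t^ν`, `0 ≤ μ < 1`, the
normalized sum-rate converges to `min{2, 2 + Wν − μ}`. -/
theorem bc_mux_gain_weak (μ ν W lam : ℝ)
    (hμ0 : 0 ≤ μ) (hμ1 : μ < 1) (hW : 0 < W) (hν : 0 ≤ ν)
    (hlam0 : 0 < lam) (hlam1 : lam < 1) :
    Tendsto
      (fun t : ℝ =>
        min (Real.logb 2 (1 + t / 2) + Real.logb 2 (1 + (1 - lam) * t))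
            (Real.logb 2 (1 + (t + (1 - lam) * t ^ μ - 1) / 2) +
              Real.logb 2 (1 + t / t ^ μ) +
              W * Real.logb 2 (1 + lam * t ^ ν / W)) /
          Real.logb 2 (1 + t))
      atTop (nhds (min 2 (2 + W * ν - μ))) :=
  bc_mux_gain_weak_general μ ν W lam hμ1 hW hν hlam0 hlam1
end

section
/- Fix μ ≥ 1, W > 0, ν ≥ 0 and λ ∈ (0,1), and set λ̄ = 1 − λ. Then as t → ∞, the ratio min{ log₂(1 + t) + log₂(1 + λ̄·t) , log₂(1 + t + λ̄·t^μ) + W·log₂(1 + λ·t^ν/W) } / log₂(1 + t) converges to min{2, μ + W·ν}. -/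
open Filter

/-- If `A * t^p ≤ f t ≤ B * t^p` eventually, then `log (f t) / log t → p`. -/
lemma log_ratio_tendsto (A B p : ℝ) (hA : 0 < A) (hB : 0 < B) (f : ℝ → ℝ)
    (h : ∀ᶠ t in atTop, A * t ^ p ≤ f t ∧ f t ≤ B * t ^ p) :
    Tendsto (fun t => Real.log (f t) / Real.log t) atTop (nhds p) := by
  have hlog : Tendsto Real.log atTop atTop := Real.tendsto_log_atTop
  have hlo : Tendsto (fun t => Real.log A / Real.log t + p) atTop (nhds (0 + p)) :=
    (tendsto_const_nhds.div_atTop hlog).add tendsto_const_nhds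
  have hhi : Tendsto (fun t => Real.log B / Real.log t + p) atTop (nhds (0 + p)) :=
    (tendsto_const_nhds.div_atTop hlog).add tendsto_const_nhds
  rw [zero_add] at hlo hhi
  refine tendsto_of_tendsto_of_tendsto_of_le_of_le' hlo hhi ?_ ?_
  · filter_upwards [h, eventually_gt_atTop 1] with t ht ht1
    have htp : (0:ℝ) < t := by linarith
    have hℓ : 0 < Real.log t := Real.log_pos ht1
    have h1 : Real.log (A * t ^ p) ≤ Real.log (f t) := by
      have : 0 < A * t ^ p := by positivity
      gcongr
      exact ht.1
    have h2 : Real.log (A * t ^ p) = Real.log A + p * Real.log t := by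
      rw [Real.log_mul (ne_of_gt hA) (by positivity), Real.log_rpow htp]
    calc Real.log A / Real.log t + p
        = (Real.log A + p * Real.log t) / Real.log t := by field_simp
      _ ≤ Real.log (f t) / Real.log t := by
          rw [← h2]; gcongr
  · filter_upwards [h, eventually_gt_atTop 1] with t ht ht1
    have htp : (0:ℝ) < t := by linarith
    have hℓ : 0 < Real.log t := Real.log_pos ht1
    have hfpos : 0 < f t := lt_of_lt_of_le (by positivity) ht.1
    have h1 : Real.log (f t) ≤ Real.log (B * t ^ p) := by
      gcongr
      exact ht.2
    have h2 : Real.log (B * t ^ p) = Real.log B + p * Real.log t := by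
      rw [Real.log_mul (ne_of_gt hB) (by positivity), Real.log_rpow htp]
    calc Real.log (f t) / Real.log t
        ≤ (Real.log B + p * Real.log t) / Real.log t := by
          rw [← h2]; gcongr
      _ = Real.log B / Real.log t + p := by field_simp

/-- Algebraic identity: the normalized min expression is independent of the
common positive denominator `c`. -/
lemma min_ratio_eq (a b d e Wc c : ℝ) (hc : 0 < c) :
    min (a / c + b / c) (d / c + Wc * (e / c)) / (a / c)
      = min (a + b) (d + Wc * e) / a := by
  have h1 : a / c + b / c = (a + b) / c := by ring
  have h2 : d / c + Wc * (e / c) = (d + Wc * e) / c := by ring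
  rw [h1, h2, min_div_div_right hc.le]
  rcases eq_or_ne a 0 with rfl | ha
  · simp
  · field_simp

/-- Asymptotic multiplexing gain of bin-and-cancel in the strong interference
regime: with `SNR = t`, `INR = t^μ`, `SNR_side = t^ν`, `μ ≥ 1`, the normalized
sum-rate converges to `min{2, μ + Wν}`. -/
theorem bc_mux_gain_strong (μ ν W lam : ℝ)
    (hμ : 1 ≤ μ) (hW : 0 < W) (hν : 0 ≤ ν)
    (hlam0 : 0 < lam) (hlam1 : lam < 1) :
    Tendsto
      (fun t : ℝ =>
        min (Real.logb 2 (1 + t) + Real.logb 2 (1 + (1 - lam) * t))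
            (Real.logb 2 (1 + t + (1 - lam) * t ^ μ) +
              W * Real.logb 2 (1 + lam * t ^ ν / W)) /
          Real.logb 2 (1 + t))
      atTop (nhds (min 2 (μ + W * ν))) := by
  have hl : (0:ℝ) < 1 - lam := by linarith
  -- the four log-ratio limits
  have h1 : Tendsto (fun t => Real.log (1 + t) / Real.log t) atTop (nhds 1) := by
    apply log_ratio_tendsto 1 2 1 one_pos two_pos
    filter_upwards [eventually_ge_atTop 1] with t ht
    have h0 : (0:ℝ) ≤ t := by linarith
    rw [Real.rpow_one]
    constructor <;> nlinarith
  have h2 : Tendsto (fun t => Real.log (1 + (1 - lam) * t) / Real.log t) atTop (nhds 1) := by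
    apply log_ratio_tendsto (1 - lam) 2 1 hl two_pos
    filter_upwards [eventually_ge_atTop 1] with t ht
    rw [Real.rpow_one]
    constructor <;> nlinarith
  have h3 : Tendsto (fun t => Real.log (1 + t + (1 - lam) * t ^ μ) / Real.log t)
      atTop (nhds μ) := by
    apply log_ratio_tendsto (1 - lam) 3 μ hl (by norm_num)
    filter_upwards [eventually_ge_atTop 1] with t ht
    have h0 : (0:ℝ) < t := by linarith
    have hone : (1:ℝ) ≤ t ^ μ := Real.one_le_rpow ht (by linarith)
    have htle : t ≤ t ^ μ := by
      calc t = t ^ (1:ℝ) := (Real.rpow_one t).symm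
        _ ≤ t ^ μ := Real.rpow_le_rpow_of_exponent_le ht hμ
    constructor <;> nlinarith
  have h4 : Tendsto (fun t => Real.log (1 + lam * t ^ ν / W) / Real.log t)
      atTop (nhds ν) := by
    have hc : (0:ℝ) < lam / W := div_pos hlam0 hW
    apply log_ratio_tendsto (lam / W) (1 + lam / W) ν hc (by linarith)
    filter_upwards [eventually_ge_atTop 1] with t ht
    have h0 : (0:ℝ) < t := by linarith
    have hone : (1:ℝ) ≤ t ^ ν := Real.one_le_rpow ht hν
    have hmain : lam * t ^ ν / W = lam / W * t ^ ν := by ring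
    rw [hmain]
    constructor <;> nlinarith
  -- the combined limit
  have hmin : Tendsto
      (fun t => min (Real.log (1 + t) / Real.log t + Real.log (1 + (1 - lam) * t) / Real.log t)
          (Real.log (1 + t + (1 - lam) * t ^ μ) / Real.log t +
            W * (Real.log (1 + lam * t ^ ν / W) / Real.log t)) /
        (Real.log (1 + t) / Real.log t))
      atTop (nhds (min (1 + 1) (μ + W * ν) / 1)) :=
    ((h1.add h2).min (h3.add (h4.const_mul W))).div h1 one_ne_zero
  norm_num at hmin
  refine hmin.congr' ?_
  filter_upwards [eventually_gt_atTop 1] with t ht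
  have h0 : (0:ℝ) < t := by linarith
  have hℓ : 0 < Real.log t := Real.log_pos ht
  have hlog2 : (0:ℝ) < Real.log 2 := Real.log_pos (by norm_num)
  rw [min_ratio_eq _ _ _ _ _ _ hℓ]
  simp only [Real.logb]
  rw [min_ratio_eq _ _ _ _ _ _ hlog2]
end

section
/- Fix W > 0, ν ≥ 0 and λ ∈ (0,1), and set λ̄ = 1 − λ. Then as t → ∞, the ratio [ log₂(1 + t) + min{ W·log₂(1 + λ·t^ν/W) , log₂(1 + λ̄·t) } ] / log₂(1 + t) converges to min{2, 1 + W·ν}. -/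
/-!
Since `λ t^ν / W = (λ/W) t^ν` and `λ̄ t` are both of the form `c t^a` with `c > 0`, `a ≥ 0`,
it suffices that `log (1 + c t^a) = a log t + O(1)`: then both rates grow like `a log t` against
`log (1 + t) ∼ log t`, giving the limit `1 + min (W ν) 1`.
-/

open Filter Real

theorem tendsto_log_one_add_mul_rpow_div_log {a c : ℝ} (ha : 0 ≤ a) (hc : 0 < c) :
    Tendsto (fun t : ℝ => log (1 + c * t ^ a) / log t) atTop (nhds a) := by
  have hinv : Tendsto (fun t : ℝ => (log t)⁻¹) atTop (nhds 0) :=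
    tendsto_inv_atTop_zero.comp tendsto_log_atTop
  have hbound (k : ℝ) : Tendsto (fun t : ℝ => a + k * (log t)⁻¹) atTop (nhds a) := by
    simpa using tendsto_const_nhds.add (hinv.const_mul k)
  -- `c t^a ≤ 1 + c t^a ≤ (1 + c) t^a` once `t ≥ 1`
  refine tendsto_of_tendsto_of_tendsto_of_le_of_le' (hbound (log c)) (hbound (log (1 + c)))
    ?_ ?_ <;> filter_upwards [eventually_gt_atTop 1] with t ht
  all_goals
    have ht0 : 0 < t := one_pos.trans ht
    have hlog : 0 < log t := log_pos ht
    have hpow : 0 < t ^ a := rpow_pos_of_pos ht0 a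
  · rw [le_div_iff₀ hlog]
    calc (a + log c * (log t)⁻¹) * log t = log (c * t ^ a) := by
          rw [log_mul hc.ne' hpow.ne', log_rpow ht0]; field_simp; ring
      _ ≤ log (1 + c * t ^ a) := log_le_log (by positivity) (by linarith)
  · rw [div_le_iff₀ hlog]
    calc log (1 + c * t ^ a) ≤ log ((1 + c) * t ^ a) := by
          refine log_le_log (by positivity) ?_
          nlinarith [one_le_rpow ht.le ha]
      _ = (a + log (1 + c) * (log t)⁻¹) * log t := by
          rw [log_mul (by positivity) hpow.ne', log_rpow ht0]; field_simp; ring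

theorem tendsto_log_one_add_mul_rpow_div_log_one_add {a c : ℝ} (ha : 0 ≤ a) (hc : 0 < c) :
    Tendsto (fun t : ℝ => log (1 + c * t ^ a) / log (1 + t)) atTop (nhds a) := by
  have hden : Tendsto (fun t : ℝ => log (1 + t) / log t) atTop (nhds 1) := by
    simpa using tendsto_log_one_add_mul_rpow_div_log zero_le_one one_pos
  have := (tendsto_log_one_add_mul_rpow_div_log ha hc).div hden one_ne_zero
  rw [div_one] at this
  refine this.congr' ?_
  filter_upwards [eventually_gt_atTop 1] with t ht
  exact div_div_div_cancel_right₀ (log_pos ht).ne' _ _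

/-- Asymptotic multiplexing gain of decode-and-cancel: with `SNR = t`,
`SNR_side = t^ν`, the normalized sum-rate
`(log₂(1+t) + min{W·log₂(1 + λ·t^ν/W), log₂(1 + λ̄·t)}) / log₂(1+t)` converges to
`min{2, 1 + Wν}`. -/
theorem dc_mux_gain (ν W lam : ℝ)
    (hW : 0 < W) (hν : 0 ≤ ν) (hlam0 : 0 < lam) (hlam1 : lam < 1) :
    Tendsto
      (fun t : ℝ =>
        (Real.logb 2 (1 + t) +
            min (W * Real.logb 2 (1 + lam * t ^ ν / W))
              (Real.logb 2 (1 + (1 - lam) * t))) /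
          Real.logb 2 (1 + t))
      atTop (nhds (min 2 (1 + W * ν))) := by
  have hside : Tendsto (fun t : ℝ => log (1 + lam * t ^ ν / W) / log (1 + t)) atTop (nhds ν) := by
    simpa only [mul_div_right_comm] using
      tendsto_log_one_add_mul_rpow_div_log_one_add hν (div_pos hlam0 hW)
  have hmain : Tendsto (fun t : ℝ => log (1 + (1 - lam) * t) / log (1 + t)) atTop (nhds 1) := by
    simpa using tendsto_log_one_add_mul_rpow_div_log_one_add zero_le_one (sub_pos.2 hlam1)
  have hlim : min 2 (1 + W * ν) = 1 + min (W * ν) 1 := by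
    rw [← min_add_add_left, min_comm, one_add_one_eq_two]
  rw [hlim]
  refine (tendsto_const_nhds.add ((hside.const_mul W).min hmain)).congr' ?_
  filter_upwards [eventually_gt_atTop 0] with t ht
  have hden : 0 < logb 2 (1 + t) := logb_pos one_lt_two (by linarith)
  rw [add_div, div_self hden.ne', ← min_div_div_right hden.le, mul_div_assoc W]
  simp only [logb, div_div_div_cancel_right₀ (log_pos one_lt_two).ne']
end

section
/- Fix K > 0, ν ≥ 0 and μ ≥ 0, and for t > 0 set A(t) = 1 + K²·t^ν/(1+K)². Then as t → ∞, the ratio [ log₂( 1 + t·A(t)/( A(t) + t^μ/(1+K)² ) ) + log₂( 1 + t/(1+K)² ) ] / log₂(1 + t) converges to max{1, min{2, 2 + ν − μ}}; in particular the limit equals min{2, 2 + ν − μ} when μ < ν + 1, and equals 1 when μ ≥ ν + 1. -/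
/-!
Say that a positive function `f` has growth exponent `α` when `log f(t) / log t → α`, i.e.
`f(t)` grows like `t^α` up to subpolynomial factors. Exponents add under products, subtract
under quotients and combine by `max` under sums of positive functions (since
`max f g ≤ f + g ≤ 2 max f g`). With `A(t) = 1 + c t^ν` of exponent `ν`, the first rate
`1 + t A / (A + d t^μ)` has exponent `max 0 (1 + ν - max ν μ)`, while `1 + t / (1 + K)²` and
`1 + t` both have exponent `1`; the normalized sum-rate is the ratio of the exponents.
-/

open Filter Topology Real

def HasGrowthExponent (f : ℝ → ℝ) (α : ℝ) : Prop :=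
  (∀ᶠ t in atTop, 0 < f t) ∧ Tendsto (fun t => log (f t) / log t) atTop (𝓝 α)

lemma Real.log_add_le_log_two_add_max {x y : ℝ} (hx : 0 < x) (hy : 0 < y) :
    log (x + y) ≤ log 2 + max (log x) (log y) := by
  rcases le_total x y with hxy | hxy
  · calc log (x + y) ≤ log (2 * y) := log_le_log (by positivity) (by linarith)
      _ = log 2 + log y := log_mul two_ne_zero hy.ne'
      _ ≤ log 2 + max (log x) (log y) := by gcongr; exact le_max_right _ _
  · calc log (x + y) ≤ log (2 * x) := log_le_log (by positivity) (by linarith)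
      _ = log 2 + log x := log_mul two_ne_zero hx.ne'
      _ ≤ log 2 + max (log x) (log y) := by gcongr; exact le_max_left _ _

namespace HasGrowthExponent

variable {f g : ℝ → ℝ} {α β : ℝ}

lemma rpow (α : ℝ) : HasGrowthExponent (fun t => t ^ α) α := by
  refine ⟨(eventually_gt_atTop 0).mono fun t ht => rpow_pos_of_pos ht α,
    tendsto_const_nhds.congr' ?_⟩
  filter_upwards [eventually_gt_atTop 1] with t ht
  rw [log_rpow (by linarith), mul_div_cancel_right₀ _ (log_pos ht).ne']

lemma self : HasGrowthExponent (fun t => t) 1 := by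
  simpa using rpow 1

lemma const {c : ℝ} (hc : 0 < c) : HasGrowthExponent (fun _ => c) 0 :=
  ⟨.of_forall fun _ => hc, by simpa using tendsto_const_nhds.div_atTop tendsto_log_atTop⟩

lemma mul (hf : HasGrowthExponent f α) (hg : HasGrowthExponent g β) :
    HasGrowthExponent (fun t => f t * g t) (α + β) := by
  refine ⟨(hf.1.and hg.1).mono fun t h => mul_pos h.1 h.2, (hf.2.add hg.2).congr' ?_⟩
  filter_upwards [hf.1, hg.1] with t hft hgt
  rw [log_mul hft.ne' hgt.ne', add_div]

lemma div (hf : HasGrowthExponent f α) (hg : HasGrowthExponent g β) :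
    HasGrowthExponent (fun t => f t / g t) (α - β) := by
  refine ⟨(hf.1.and hg.1).mono fun t h => div_pos h.1 h.2, (hf.2.sub hg.2).congr' ?_⟩
  filter_upwards [hf.1, hg.1] with t hft hgt
  rw [log_div hft.ne' hgt.ne', sub_div]

lemma add (hf : HasGrowthExponent f α) (hg : HasGrowthExponent g β) :
    HasGrowthExponent (fun t => f t + g t) (max α β) := by
  refine ⟨(hf.1.and hg.1).mono fun t h => add_pos h.1 h.2, ?_⟩
  have hmax := hf.2.max hg.2
  have hupper := (tendsto_const_nhds (x := log 2)).div_atTop tendsto_log_atTop |>.add hmax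
  rw [zero_add] at hupper
  refine tendsto_of_tendsto_of_tendsto_of_le_of_le' hmax hupper ?_ ?_
  · filter_upwards [hf.1, hg.1, eventually_gt_atTop 1] with t hft hgt ht
    have hlog := log_pos ht
    exact max_le (by gcongr; linarith) (by gcongr; linarith)
  · filter_upwards [hf.1, hg.1, eventually_gt_atTop 1] with t hft hgt ht
    have hlog := log_pos ht
    calc log (f t + g t) / log t ≤ (log 2 + max (log (f t)) (log (g t))) / log t := by
          gcongr; exact log_add_le_log_two_add_max hft hgt
      _ = log 2 / log t + max (log (f t) / log t) (log (g t) / log t) := by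
          rw [add_div, max_div_div_right hlog.le]

lemma tendsto_logb_div_logb (hf : HasGrowthExponent f α) (hg : HasGrowthExponent g β)
    (hβ : β ≠ 0) {b : ℝ} (b_pos : 0 < b) (b_ne_one : b ≠ 1) :
    Tendsto (fun t => logb b (f t) / logb b (g t)) atTop (𝓝 (α / β)) := by
  refine (hf.2.div hg.2 hβ).congr' ?_
  filter_upwards [eventually_gt_atTop 1] with t ht
  rw [Pi.div_apply, div_div_div_cancel_right₀ (log_pos ht).ne', logb, logb,
    div_div_div_cancel_right₀ (log_ne_zero_of_pos_of_ne_one b_pos b_ne_one)]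

end HasGrowthExponent

lemma max_zero_add_one_sub_max_add_one (ν μ : ℝ) :
    max 0 (1 + ν - max ν μ) + 1 = max 1 (min 2 (2 + ν - μ)) := by
  rcases le_total ν μ with h | h
  · rw [max_eq_right h, min_eq_right (by linarith), ← max_add_add_right]
    ring_nf
  · rw [max_eq_left h, min_eq_left (by linarith)]
    norm_num

theorem ec_mux_gain_general (K ν μ : ℝ) (hK : 0 < K) (hν : 0 ≤ ν) :
    Tendsto
      (fun t : ℝ =>
        (Real.logb 2
            (1 + t * (1 + K ^ 2 * t ^ ν / (1 + K) ^ 2) /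
              ((1 + K ^ 2 * t ^ ν / (1 + K) ^ 2) + t ^ μ / (1 + K) ^ 2)) +
          Real.logb 2 (1 + t / (1 + K) ^ 2)) /
          Real.logb 2 (1 + t))
      atTop (nhds (max 1 (min 2 (2 + ν - μ)))) ∧
    (μ < ν + 1 → max 1 (min 2 (2 + ν - μ)) = min 2 (2 + ν - μ)) ∧
    (ν + 1 ≤ μ → max 1 (min 2 (2 + ν - μ)) = 1) := by
  have hq : 0 < (1 + K) ^ 2 := by positivity
  have hone := HasGrowthExponent.const one_pos
  have hscale := HasGrowthExponent.const hq
  have hA : HasGrowthExponent (fun t => 1 + K ^ 2 * t ^ ν / (1 + K) ^ 2) ν := by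
    have h := hone.add
      (((HasGrowthExponent.const (pow_pos hK 2)).mul (HasGrowthExponent.rpow ν)).div hscale)
    rwa [zero_add, sub_zero, max_eq_right hν] at h
  have hF := hone.add
    ((HasGrowthExponent.self.mul hA).div (hA.add ((HasGrowthExponent.rpow μ).div hscale)))
  have hG := hone.add (HasGrowthExponent.self.div hscale)
  have hH := hone.add HasGrowthExponent.self
  refine ⟨?_, fun h => max_eq_right (le_min one_le_two (by linarith)),
    fun h => by rw [min_eq_right (by linarith), max_eq_left (by linarith)]⟩
  have key := (hF.mul hG).tendsto_logb_div_logb hH (by norm_num) two_pos one_lt_two.ne'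
  simp only [sub_zero, max_eq_right zero_le_one, div_one,
    max_zero_add_one_sub_max_add_one] at key
  refine key.congr' ?_
  filter_upwards [hF.1, hG.1] with t hFt hGt
  rw [logb_mul hFt.ne' hGt.ne']

/-- Asymptotic multiplexing gain of estimate-and-cancel with scaling `K`:
with `SNR = t`, `INR = t^μ`, `SNR_side = t^ν` and `A(t) = 1 + K²·t^ν/(1+K)²`,
the normalized sum-rate converges to `max{1, min{2, 2 + ν − μ}}`; in particular
the limit is `min{2, 2 + ν − μ}` when `μ < ν + 1` and `1` when `μ ≥ ν + 1`. -/
theorem ec_mux_gain (K ν μ : ℝ) (hK : 0 < K) (hν : 0 ≤ ν) (hμ : 0 ≤ μ) :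
    Tendsto
      (fun t : ℝ =>
        (Real.logb 2
            (1 + t * (1 + K ^ 2 * t ^ ν / (1 + K) ^ 2) /
              ((1 + K ^ 2 * t ^ ν / (1 + K) ^ 2) + t ^ μ / (1 + K) ^ 2)) +
          Real.logb 2 (1 + t / (1 + K) ^ 2)) /
          Real.logb 2 (1 + t))
      atTop (nhds (max 1 (min 2 (2 + ν - μ)))) ∧
    (μ < ν + 1 → max 1 (min 2 (2 + ν - μ)) = min 2 (2 + ν - μ)) ∧
    (ν + 1 ≤ μ → max 1 (min 2 (2 + ν - μ)) = 1) :=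
  ec_mux_gain_general K ν μ hK hν
end

section
/- Fix μ ∈ [0,1), W > 0, ν ≥ 0 and λ ∈ (0,1), and set λ̄ = 1 − λ. For t > 0 let G(t) = (1 + λ·t^ν/W)^W − 1. Then as t → ∞, the ratio [ log₂( 1 + t·( 1 + t + (1 + t + λ̄·t^μ)·G(t) ) / ( (1 + t + λ̄·t^μ)·G(t) + (1 + t)·(1 + λ̄·t^μ) ) ) + log₂(1 + λ̄·t) ] / log₂(1 + t) converges to min{2, 2 + W·ν − μ}. -/
/-!
Say `f` has log-order `a` when `f` is eventually positive and `log f(t) / log t → a`.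
Log-orders add under products, subtract under quotients, scale under real powers, take the
maximum under sums of positive functions, and are unchanged when `f` is squeezed between two
positive multiples of a function of the same order. For `μ < 1` the gain `G` has order `Wν`, the
numerator and denominator of the compressed rate's argument have orders `1 + Wν` and
`1 + max(Wν, μ)`, so the downlink term has order `1 + Wν - max(Wν, μ) ≥ 0`; with the uplink
term, of order `1`, this gives `min 2 (2 + Wν - μ)`.
-/

open Filter Real Topology

structure HasLogOrder (f : ℝ → ℝ) (a : ℝ) : Prop where
  eventually_pos : ∀ᶠ t in atTop, 0 < f t
  tendsto : Tendsto (fun t => log (f t) / log t) atTop (𝓝 a)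

theorem hasLogOrder_const {c : ℝ} (hc : 0 < c) : HasLogOrder (fun _ => c) 0 :=
  ⟨.of_forall fun _ => hc, tendsto_const_nhds.div_atTop tendsto_log_atTop⟩

theorem hasLogOrder_id : HasLogOrder (fun t => t) 1 := by
  refine ⟨eventually_gt_atTop 0, tendsto_const_nhds.congr' ?_⟩
  filter_upwards [eventually_gt_atTop 1] with t ht
  exact (div_self (log_pos ht).ne').symm

theorem hasLogOrder_rpow (e : ℝ) : HasLogOrder (fun t => t ^ e) e := by
  refine ⟨(eventually_gt_atTop 0).mono fun t ht => rpow_pos_of_pos ht e,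
    tendsto_const_nhds.congr' ?_⟩
  filter_upwards [eventually_gt_atTop 1] with t ht
  rw [log_rpow (by linarith), mul_div_assoc, div_self (log_pos ht).ne', mul_one]

section

variable {f g : ℝ → ℝ} {a b : ℝ}

theorem HasLogOrder.of_le_of_le {m M : ℝ} (hf : HasLogOrder f a) (hm : 0 < m)
    (hlow : ∀ᶠ t in atTop, m * f t ≤ g t) (hup : ∀ᶠ t in atTop, g t ≤ M * f t) :
    HasLogOrder g a := by
  have hg : ∀ᶠ t in atTop, 0 < g t := by
    filter_upwards [hf.eventually_pos, hlow] with t hft hlowt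
    exact (mul_pos hm hft).trans_le hlowt
  refine ⟨hg, ?_⟩
  have hlog : ∀ c, Tendsto (fun t => log c / log t + log (f t) / log t) atTop (𝓝 a) :=
    fun c => by simpa using (tendsto_const_nhds.div_atTop tendsto_log_atTop).add hf.tendsto
  refine tendsto_of_tendsto_of_tendsto_of_le_of_le' (hlog m) (hlog M) ?_ ?_
  · filter_upwards [hf.eventually_pos, hlow, eventually_gt_atTop 1] with t hft hlowt ht
    rw [← add_div, ← log_mul hm.ne' hft.ne']
    exact div_le_div_of_nonneg_right (log_le_log (mul_pos hm hft) hlowt) (log_pos ht).le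
  · filter_upwards [hf.eventually_pos, hg, hup, eventually_gt_atTop 1] with t hft hgt hupt ht
    have hM : 0 < M := pos_of_mul_pos_left (hgt.trans_le hupt) hft.le
    rw [← add_div, ← log_mul hM.ne' hft.ne']
    exact div_le_div_of_nonneg_right (log_le_log hgt hupt) (log_pos ht).le

theorem HasLogOrder.const_mul {c : ℝ} (hf : HasLogOrder f a) (hc : 0 < c) :
    HasLogOrder (fun t => c * f t) a :=
  hf.of_le_of_le hc (.of_forall fun _ => le_rfl) (.of_forall fun _ => le_rfl)

theorem HasLogOrder.div_const {c : ℝ} (hf : HasLogOrder f a) (hc : 0 < c) :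
    HasLogOrder (fun t => f t / c) a :=
  hf.of_le_of_le (inv_pos.2 hc) (.of_forall fun _ => (div_eq_inv_mul _ _).ge)
    (.of_forall fun _ => (div_eq_inv_mul _ _).le)

theorem HasLogOrder.mul (hf : HasLogOrder f a) (hg : HasLogOrder g b) :
    HasLogOrder (fun t => f t * g t) (a + b) := by
  refine ⟨(hf.eventually_pos.and hg.eventually_pos).mono fun t h => mul_pos h.1 h.2,
    (hf.tendsto.add hg.tendsto).congr' ?_⟩
  filter_upwards [hf.eventually_pos, hg.eventually_pos] with t hft hgt
  rw [log_mul hft.ne' hgt.ne', add_div]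

theorem HasLogOrder.div (hf : HasLogOrder f a) (hg : HasLogOrder g b) :
    HasLogOrder (fun t => f t / g t) (a - b) := by
  refine ⟨(hf.eventually_pos.and hg.eventually_pos).mono fun t h => div_pos h.1 h.2,
    (hf.tendsto.sub hg.tendsto).congr' ?_⟩
  filter_upwards [hf.eventually_pos, hg.eventually_pos] with t hft hgt
  rw [log_div hft.ne' hgt.ne', sub_div]

theorem HasLogOrder.rpow (hf : HasLogOrder f a) (c : ℝ) :
    HasLogOrder (fun t => f t ^ c) (c * a) := by
  refine ⟨hf.eventually_pos.mono fun t h => rpow_pos_of_pos h c,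
    (hf.tendsto.const_mul c).congr' ?_⟩
  filter_upwards [hf.eventually_pos] with t hft
  rw [log_rpow hft, mul_div_assoc]

theorem HasLogOrder.max (hf : HasLogOrder f a) (hg : HasLogOrder g b) :
    HasLogOrder (fun t => max (f t) (g t)) (max a b) := by
  refine ⟨hf.eventually_pos.mono fun t h => lt_max_of_lt_left h,
    (hf.tendsto.max hg.tendsto).congr' ?_⟩
  filter_upwards [hf.eventually_pos, hg.eventually_pos, eventually_gt_atTop 1] with t hft hgt ht
  rw [max_div_div_right (log_pos ht).le,
    strictMonoOn_log.monotoneOn.map_max (Set.mem_Ioi.2 hft) (Set.mem_Ioi.2 hgt)]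

theorem HasLogOrder.add (hf : HasLogOrder f a) (hg : HasLogOrder g b) :
    HasLogOrder (fun t => f t + g t) (Max.max a b) := by
  refine (hf.max hg).of_le_of_le one_pos ?_ (M := 2) ?_ <;>
    filter_upwards [hf.eventually_pos, hg.eventually_pos] with t hft hgt
  · rw [one_mul, max_le_iff]
    constructor <;> linarith
  · linarith [le_max_left (f t) (g t), le_max_right (f t) (g t)]

theorem HasLogOrder.add_of_le (hf : HasLogOrder f a) (hg : HasLogOrder g b) (hab : a ≤ b) :
    HasLogOrder (fun t => f t + g t) b := by
  simpa only [max_eq_right hab] using hf.add hg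

theorem HasLogOrder.add_of_ge (hf : HasLogOrder f a) (hg : HasLogOrder g b) (hba : b ≤ a) :
    HasLogOrder (fun t => f t + g t) a := by
  simpa only [max_eq_left hba] using hf.add hg

/-- Once `f ≥ c > 1`, `f - 1` lies between `(1 - c⁻¹) f` and `f`. -/
theorem HasLogOrder.sub_one {c : ℝ} (hf : HasLogOrder f a) (hc : 1 < c)
    (hfc : ∀ᶠ t in atTop, c ≤ f t) :
    HasLogOrder (fun t => f t - 1) a := by
  have hc0 : 0 < c := one_pos.trans hc
  refine hf.of_le_of_le (M := 1) (sub_pos.2 (inv_lt_one_of_one_lt₀ hc)) ?_ ?_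
  · filter_upwards [hfc] with t hct
    have : 1 ≤ c⁻¹ * f t := by rwa [le_inv_mul_iff₀ hc0, mul_one]
    linarith
  · exact .of_forall fun t => by linarith

end

theorem hasLogOrder_one_add_mul_rpow_div_rpow_sub_one {c ν W : ℝ} (hc : 0 < c) (hν : 0 ≤ ν)
    (hW : 0 < W) : HasLogOrder (fun t => (1 + c * t ^ ν / W) ^ W - 1) (W * ν) := by
  have hbase : HasLogOrder (fun t => 1 + c * t ^ ν / W) ν :=
    (hasLogOrder_const one_pos).add_of_le (((hasLogOrder_rpow ν).const_mul hc).div_const hW) hν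
  refine (hbase.rpow W).sub_one (one_lt_rpow (lt_add_of_pos_right 1 (div_pos hc hW)) hW) ?_
  filter_upwards [eventually_ge_atTop 1] with t ht
  have hcW : c / W ≤ c * t ^ ν / W :=
    div_le_div_of_nonneg_right (le_mul_of_one_le_right hc.le (one_le_rpow ht hν)) hW.le
  exact rpow_le_rpow (by positivity) (by linarith) hW.le

theorem tendsto_logb_add_logb_div_logb {f g h : ℝ → ℝ} {a b c B : ℝ} (hB : log B ≠ 0)
    (hf : HasLogOrder f a) (hg : HasLogOrder g b) (hh : HasLogOrder h c) (hc : c ≠ 0) :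
    Tendsto (fun t => (logb B (f t) + logb B (g t)) / logb B (h t)) atTop (𝓝 ((a + b) / c)) := by
  refine ((hf.tendsto.add hg.tendsto).div hh.tendsto hc).congr' ?_
  filter_upwards [eventually_gt_atTop 1] with t ht
  simp only [Pi.div_apply, logb, ← add_div, div_div_div_cancel_right₀ (log_pos ht).ne',
    div_div_div_cancel_right₀ hB]

theorem cc_mux_gain_weak_general (μ ν W lam : ℝ)
    (hμ1 : μ < 1) (hW : 0 < W) (hν : 0 ≤ ν)
    (hlam0 : 0 < lam) (hlam1 : lam < 1) :
    Tendsto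
      (fun t : ℝ =>
        (Real.logb 2
            (1 + t * (1 + t + (1 + t + (1 - lam) * t ^ μ) *
                ((1 + lam * t ^ ν / W) ^ W - 1)) /
              ((1 + t + (1 - lam) * t ^ μ) * ((1 + lam * t ^ ν / W) ^ W - 1) +
                (1 + t) * (1 + (1 - lam) * t ^ μ))) +
          Real.logb 2 (1 + (1 - lam) * t)) /
          Real.logb 2 (1 + t))
      atTop (nhds (min 2 (2 + W * ν - μ))) := by
  have hWν : 0 ≤ W * ν := mul_nonneg hW.le hν
  have hlam : 0 < 1 - lam := sub_pos.2 hlam1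
  have hone := hasLogOrder_const one_pos
  have hT : HasLogOrder (fun t => 1 + t) 1 := hone.add_of_le hasLogOrder_id zero_le_one
  have hI := hone.add ((hasLogOrder_rpow μ).const_mul hlam)
  have hP := hT.add_of_ge ((hasLogOrder_rpow μ).const_mul hlam) hμ1.le
  have hPG := hP.mul (hasLogOrder_one_add_mul_rpow_div_rpow_sub_one hlam0 hν hW)
  have hA := hT.add_of_le hPG (le_add_of_nonneg_right hWν)
  have hB := hPG.add (hT.mul hI)
  have hR := hone.add_of_le ((hasLogOrder_id.mul hA).div hB) (by
    simp only [max_def]; split_ifs <;> linarith)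
  have hS := hone.add_of_le (hasLogOrder_id.const_mul hlam) zero_le_one
  convert tendsto_logb_add_logb_div_logb (log_pos one_lt_two).ne' hR hS hT one_ne_zero using 2
  simp only [max_def, min_def]
  split_ifs <;> linarith

/-- Asymptotic multiplexing gain of compress-and-cancel in the weak interference
regime: with `SNR1 = SNR2 = t`, `INR = t^μ`, `SNR_side = t^ν`, `0 ≤ μ < 1`, and
`G(t) = (1 + λ·t^ν/W)^W − 1`, the normalized sum-rate converges to
`min{2, 2 + Wν − μ}`. -/
theorem cc_mux_gain_weak (μ ν W lam : ℝ)
    (hμ0 : 0 ≤ μ) (hμ1 : μ < 1) (hW : 0 < W) (hν : 0 ≤ ν)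
    (hlam0 : 0 < lam) (hlam1 : lam < 1) :
    Tendsto
      (fun t : ℝ =>
        (Real.logb 2
            (1 + t * (1 + t + (1 + t + (1 - lam) * t ^ μ) *
                ((1 + lam * t ^ ν / W) ^ W - 1)) /
              ((1 + t + (1 - lam) * t ^ μ) * ((1 + lam * t ^ ν / W) ^ W - 1) +
                (1 + t) * (1 + (1 - lam) * t ^ μ))) +
          Real.logb 2 (1 + (1 - lam) * t)) /
          Real.logb 2 (1 + t))
      atTop (nhds (min 2 (2 + W * ν - μ))) :=
  cc_mux_gain_weak_general μ ν W lam hμ1 hW hν hlam0 hlam1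
end

section
/- Fix μ ≥ 1, W > 0, ν ≥ 0 and λ ∈ (0,1), and set λ̄ = 1 − λ. For t > 0 let G(t) = (1 + λ·t^ν/W)^W − 1. Then as t → ∞, the ratio [ log₂( 1 + t·( 1 + t + (1 + t + λ̄·t^μ)·G(t) ) / ( (1 + t + λ̄·t^μ)·G(t) + (1 + t)·(1 + λ̄·t^μ) ) ) + log₂(1 + λ̄·t) ] / log₂(1 + t) converges to min{2, 1 + W·ν}. -/
open Filter

lemma auxK (K : ℝ) :
    Tendsto (fun t : ℝ => K / Real.log t) atTop (nhds 0) :=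
  Tendsto.div_atTop tendsto_const_nhds Real.tendsto_log_atTop

lemma aux1 {c α : ℝ} (hc : 0 < c) (hα : 0 ≤ α) :
    Tendsto (fun t : ℝ => Real.log (1 + c * t ^ α) / Real.log t) atTop (nhds α) := by
  have h0 : Tendsto (fun t : ℝ => Real.log (t ^ (-α) + c) / Real.log t) atTop (nhds 0) := by
    apply tendsto_of_tendsto_of_tendsto_of_le_of_le' (auxK (Real.log c)) (auxK (Real.log (1 + c)))
    · filter_upwards [eventually_gt_atTop 1] with t ht
      have hL : 0 < Real.log t := Real.log_pos ht
      have hr : 0 < t ^ (-α) := Real.rpow_pos_of_pos (lt_trans one_pos ht) (-α)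
      gcongr
      all_goals linarith
    · filter_upwards [eventually_gt_atTop 1] with t ht
      have hL : 0 < Real.log t := Real.log_pos ht
      have hr : 0 < t ^ (-α) := Real.rpow_pos_of_pos (lt_trans one_pos ht) (-α)
      have h1 : t ^ (-α) ≤ 1 :=
        Real.rpow_le_one_of_one_le_of_nonpos ht.le (neg_nonpos.mpr hα)
      gcongr
      all_goals linarith
  have key : ∀ᶠ t : ℝ in atTop,
      α + Real.log (t ^ (-α) + c) / Real.log t
      = Real.log (1 + c * t ^ α) / Real.log t := by
    filter_upwards [eventually_gt_atTop 1] with t ht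
    have ht0 : (0:ℝ) < t := lt_trans one_pos ht
    have hL : 0 < Real.log t := Real.log_pos ht
    have h1 : (1 : ℝ) + c * t ^ α = t ^ α * (t ^ (-α) + c) := by
      rw [mul_add, ← Real.rpow_add ht0]
      simp [mul_comm]
    have h2 : (0:ℝ) < t ^ (-α) + c := by positivity
    rw [h1, Real.log_mul (by positivity) h2.ne', Real.log_rpow ht0]
    field_simp
  have h := (tendsto_const_nhds.add h0 : Tendsto _ atTop (nhds (α + 0)))
  rw [add_zero] at h
  exact h.congr' key

lemma aux2 {α c1 c2 : ℝ} (hα : 0 ≤ α) (hc1 : 0 < c1) (hc2 : 0 < c2) {X : ℝ → ℝ}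
    (h : ∀ᶠ t : ℝ in atTop, c1 * t ^ α ≤ X t ∧ X t ≤ c2 * t ^ α) :
    Tendsto (fun t => Real.log (1 + X t) / Real.log t) atTop (nhds α) := by
  apply tendsto_of_tendsto_of_tendsto_of_le_of_le' (aux1 hc1 hα) (aux1 hc2 hα)
  · filter_upwards [h, eventually_gt_atTop 1] with t hb ht
    have hL : 0 < Real.log t := Real.log_pos ht
    have hp : 0 < c1 * t ^ α := by positivity
    gcongr
    all_goals linarith [hb.1, hb.2]
  · filter_upwards [h, eventually_gt_atTop 1] with t hb ht
    have hL : 0 < Real.log t := Real.log_pos ht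
    have hp : 0 < c1 * t ^ α := by positivity
    gcongr
    all_goals linarith [hb.1, hb.2]

-- Case W*ν ≤ 1 : bounds proportional to q = t^(W*ν), with q ≤ t
lemma caseA (t p q g A B lb c1 c2 : ℝ)
    (ht : 1 ≤ t) (htp : t ≤ p) (hq1 : 1 ≤ q) (hqt : q ≤ t)
    (hgl : A * q ≤ g) (hgu : g ≤ B * q)
    (hA : 0 < A) (hB : 0 < B) (hlb : 0 < lb) (hlb1 : lb ≤ 1)
    (hc1 : c1 * (3 * B + 4) = lb * A) (hc1' : 0 ≤ c1)
    (hc2 : c2 * lb = 2 + 3 * B) (hc2' : 0 ≤ c2) :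
    c1 * q * ((1 + t + lb * p) * g + (1 + t) * (1 + lb * p)) ≤
      t * (1 + t + (1 + t + lb * p) * g) ∧
    t * (1 + t + (1 + t + lb * p) * g) ≤
      c2 * q * ((1 + t + lb * p) * g + (1 + t) * (1 + lb * p)) := by
  have ht0 : (0:ℝ) < t := by linarith
  have hp1 : (1:ℝ) ≤ p := le_trans ht htp
  have hq0 : (0:ℝ) < q := by linarith
  have hg0 : (0:ℝ) < g := lt_of_lt_of_le (by positivity) hgl
  constructor
  · have hD2 : (1 + t + lb * p) * g + (1 + t) * (1 + lb * p) ≤ (3 * B + 4) * (p * t) := by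
      nlinarith [mul_le_mul (show 1 + t + lb * p ≤ 3 * p by nlinarith)
          (show g ≤ B * t by nlinarith) hg0.le (by positivity : (0:ℝ) ≤ 3 * p),
        mul_le_mul (show 1 + t ≤ 2 * t by linarith)
          (show 1 + lb * p ≤ 2 * p by nlinarith) (by positivity) (by positivity)]
    have hsg : lb * p * (A * q) ≤ (1 + t + lb * p) * g :=
      mul_le_mul (by nlinarith) hgl (by positivity) (by nlinarith)
    have h1 := mul_le_mul_of_nonneg_left hD2 (show (0:ℝ) ≤ c1 * q by positivity)
    have h2 : c1 * q * ((3 * B + 4) * (p * t)) = lb * A * (q * (p * t)) := by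
      rw [← hc1]; ring
    have h3 := mul_le_mul_of_nonneg_left hsg ht0.le
    nlinarith [sq_nonneg t]
  · have hN2 : t * (1 + t + (1 + t + lb * p) * g) ≤ (2 + 3 * B) * (p * (t * q)) := by
      nlinarith [mul_le_mul (show 1 + t + lb * p ≤ 3 * p by nlinarith)
          hgu hg0.le (by positivity : (0:ℝ) ≤ 3 * p),
        mul_le_mul_of_nonneg_left (mul_le_mul (show 1 + t + lb * p ≤ 3 * p by nlinarith)
          hgu hg0.le (by positivity : (0:ℝ) ≤ 3 * p)) ht0.le,
        mul_le_mul htp (show t ≤ t * q by nlinarith) ht0.le (by linarith)]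
    have hD3 : lb * (p * t) ≤ (1 + t + lb * p) * g + (1 + t) * (1 + lb * p) := by
      nlinarith [mul_le_mul ht (show lb * p ≤ 1 + lb * p by linarith) (by positivity)
        (by linarith), mul_pos (show (0:ℝ) < 1 + t + lb * p by nlinarith) hg0]
    have h4 := mul_le_mul_of_nonneg_left hD3 (show (0:ℝ) ≤ c2 * q by positivity)
    have h5 : c2 * q * (lb * (p * t)) = (2 + 3 * B) * (p * (t * q)) := by
      rw [← hc2]; ring
    linarith

-- Case W*ν ≥ 1 : bounds proportional to t, with t ≤ q
lemma caseB (t p q g A B lb c1 c2 : ℝ)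
    (ht : 1 ≤ t) (htp : t ≤ p) (hq1 : 1 ≤ q) (htq : t ≤ q)
    (hgl : A * q ≤ g) (hgu : g ≤ B * q)
    (hA : 0 < A) (hB : 0 < B) (hlb : 0 < lb) (hlb1 : lb ≤ 1)
    (hc1 : c1 * (3 * B + 4) = lb * A) (hc1' : 0 ≤ c1)
    (hc2 : c2 * (lb * A) = 2 + 3 * B) (hc2' : 0 ≤ c2) :
    c1 * t * ((1 + t + lb * p) * g + (1 + t) * (1 + lb * p)) ≤
      t * (1 + t + (1 + t + lb * p) * g) ∧
    t * (1 + t + (1 + t + lb * p) * g) ≤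
      c2 * t * ((1 + t + lb * p) * g + (1 + t) * (1 + lb * p)) := by
  have ht0 : (0:ℝ) < t := by linarith
  have hp1 : (1:ℝ) ≤ p := le_trans ht htp
  have hq0 : (0:ℝ) < q := by linarith
  have hg0 : (0:ℝ) < g := lt_of_lt_of_le (by positivity) hgl
  constructor
  · have hD2 : (1 + t + lb * p) * g + (1 + t) * (1 + lb * p) ≤ (3 * B + 4) * (p * q) := by
      nlinarith [mul_le_mul (show 1 + t + lb * p ≤ 3 * p by nlinarith)
          hgu hg0.le (by positivity : (0:ℝ) ≤ 3 * p),
        mul_le_mul (show 1 + t ≤ 2 * q by linarith)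
          (show 1 + lb * p ≤ 2 * p by nlinarith) (by positivity) (by positivity)]
    have hsg : lb * p * (A * q) ≤ (1 + t + lb * p) * g :=
      mul_le_mul (by nlinarith) hgl (by positivity) (by nlinarith)
    have h1 := mul_le_mul_of_nonneg_left hD2 (show (0:ℝ) ≤ c1 * t by positivity)
    have h2 : c1 * t * ((3 * B + 4) * (p * q)) = lb * A * (t * (p * q)) := by
      rw [← hc1]; ring
    have h3 := mul_le_mul_of_nonneg_left hsg ht0.le
    nlinarith [sq_nonneg t]
  · have hN2 : t * (1 + t + (1 + t + lb * p) * g) ≤ (2 + 3 * B) * (p * (t * q)) := by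
      nlinarith [mul_le_mul_of_nonneg_left (mul_le_mul (show 1 + t + lb * p ≤ 3 * p by nlinarith)
          hgu hg0.le (by positivity : (0:ℝ) ≤ 3 * p)) ht0.le,
        mul_le_mul htp (show t ≤ t * q by nlinarith) ht0.le (by linarith)]
    have hD3 : lb * (A * (p * q)) ≤ (1 + t + lb * p) * g + (1 + t) * (1 + lb * p) := by
      nlinarith [mul_le_mul (show lb * p ≤ 1 + t + lb * p by linarith) hgl
        (by positivity) (by nlinarith),
        mul_pos (show (0:ℝ) < 1 + t by linarith) (show (0:ℝ) < 1 + lb * p by positivity)]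
    have h4 := mul_le_mul_of_nonneg_left hD3 (show (0:ℝ) ≤ c2 * t by positivity)
    have h5 : c2 * t * (lb * (A * (p * q))) = (2 + 3 * B) * (t * (p * q)) := by
      rw [← hc2]; ring
    linarith
open Filter

lemma Gbound (ν W lam : ℝ) (hW : 0 < W) (hν : 0 ≤ ν) (hlam0 : 0 < lam) :
    ∃ A B : ℝ, 0 < A ∧ 0 < B ∧ ∀ᶠ t : ℝ in atTop,
      A * t ^ (W * ν) ≤ (1 + lam * t ^ ν / W) ^ W - 1 ∧
      (1 + lam * t ^ ν / W) ^ W - 1 ≤ B * t ^ (W * ν) := by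
  rcases eq_or_lt_of_le hν with hν0 | hν0
  · subst hν0
    have hb : (1:ℝ) < 1 + lam / W := by
      have := div_pos hlam0 hW; linarith
    have h1 : 1 < (1 + lam / W) ^ W :=
      (Real.one_lt_rpow_iff_of_pos (by linarith)).mpr (Or.inl ⟨hb, hW⟩)
    refine ⟨(1 + lam / W) ^ W - 1, (1 + lam / W) ^ W - 1, by linarith, by linarith, ?_⟩
    filter_upwards with t
    simp [Real.rpow_zero]
  · refine ⟨(lam / W) ^ W / 2, (1 + lam / W) ^ W, by positivity, by positivity, ?_⟩
    have htend : Tendsto (fun t : ℝ => (lam * t ^ ν / W) ^ W) atTop atTop := by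
      have h2 : Tendsto (fun t : ℝ => lam / W * t ^ ν) atTop atTop :=
        (tendsto_rpow_atTop hν0).const_mul_atTop (by positivity)
      have h3 := (tendsto_rpow_atTop hW).comp h2
      refine h3.congr fun t => ?_
      simp only [Function.comp_apply]
      congr 1
      ring
    filter_upwards [eventually_ge_atTop 1, htend.eventually_ge_atTop 2] with t ht1 ht2
    have ht0 : (0:ℝ) < t := lt_of_lt_of_le one_pos ht1
    have htν : (1:ℝ) ≤ t ^ ν := by
      calc (1:ℝ) = t ^ (0:ℝ) := (Real.rpow_zero t).symm
        _ ≤ t ^ ν := Real.rpow_le_rpow_of_exponent_le ht1 hν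
    have htν0 : (0:ℝ) < t ^ ν := by linarith
    have heq : lam * t ^ ν / W = lam / W * t ^ ν := by ring
    have heqx : (lam * t ^ ν / W) ^ W = (lam / W) ^ W * t ^ (W * ν) := by
      rw [heq, Real.mul_rpow (by positivity) (by positivity), mul_comm W ν,
        Real.rpow_mul ht0.le]
    have hx0 : 0 < lam * t ^ ν / W := by positivity
    have hup : (1 + lam * t ^ ν / W) ^ W ≤ (1 + lam / W) ^ W * t ^ (W * ν) := by
      have hbase : 1 + lam * t ^ ν / W ≤ (1 + lam / W) * t ^ ν := by
        have hd : 0 < lam / W := by positivity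
        nlinarith
      calc (1 + lam * t ^ ν / W) ^ W ≤ ((1 + lam / W) * t ^ ν) ^ W :=
            Real.rpow_le_rpow (by positivity) hbase hW.le
        _ = (1 + lam / W) ^ W * (t ^ ν) ^ W :=
            Real.mul_rpow (by positivity) (by positivity)
        _ = (1 + lam / W) ^ W * t ^ (W * ν) := by
            rw [mul_comm W ν, Real.rpow_mul ht0.le]
    have hlow : (lam / W) ^ W * t ^ (W * ν) ≤ (1 + lam * t ^ ν / W) ^ W := by
      rw [← heqx]
      exact Real.rpow_le_rpow hx0.le (by linarith) hW.le
    rw [heqx] at ht2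
    constructor
    · linarith
    · linarith

set_option maxHeartbeats 1000000 in
lemma mainX (μ ν W lam : ℝ)
    (hμ : 1 ≤ μ) (hW : 0 < W) (hν : 0 ≤ ν)
    (hlam0 : 0 < lam) (hlam1 : lam < 1) :
    Tendsto
      (fun t : ℝ =>
        Real.log
            (1 + t * (1 + t + (1 + t + (1 - lam) * t ^ μ) *
                ((1 + lam * t ^ ν / W) ^ W - 1)) /
              ((1 + t + (1 - lam) * t ^ μ) * ((1 + lam * t ^ ν / W) ^ W - 1) +
                (1 + t) * (1 + (1 - lam) * t ^ μ))) / Real.log t)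
      atTop (nhds (min 1 (W * ν))) := by
  obtain ⟨A, B, hA, hB, hG⟩ := Gbound ν W lam hW hν hlam0
  have hlb : (0:ℝ) < 1 - lam := by linarith
  have hWν : 0 ≤ W * ν := by positivity
  have hc2d : (0:ℝ) < 3 * B + 4 := by linarith
  rcases le_total (W * ν) 1 with hm | hm
  · rw [min_eq_right hm]
    apply aux2 hWν
      (show 0 < (1 - lam) * A / (3 * B + 4) by positivity)
      (show 0 < (2 + 3 * B) / (1 - lam) by positivity)
    filter_upwards [hG, eventually_ge_atTop 1] with t hGt ht1
    have ht0 : (0:ℝ) < t := lt_of_lt_of_le one_pos ht1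
    have htp : t ≤ t ^ μ := by
      calc t = t ^ (1:ℝ) := (Real.rpow_one t).symm
        _ ≤ t ^ μ := Real.rpow_le_rpow_of_exponent_le ht1 hμ
    have hq1 : (1:ℝ) ≤ t ^ (W * ν) := by
      calc (1:ℝ) = t ^ (0:ℝ) := (Real.rpow_zero t).symm
        _ ≤ t ^ (W * ν) := Real.rpow_le_rpow_of_exponent_le ht1 hWν
    have hqt : t ^ (W * ν) ≤ t := by
      calc t ^ (W * ν) ≤ t ^ (1:ℝ) := Real.rpow_le_rpow_of_exponent_le ht1 hm
        _ = t := Real.rpow_one t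
    have hcase := caseA t (t ^ μ) (t ^ (W * ν)) ((1 + lam * t ^ ν / W) ^ W - 1)
      A B (1 - lam) ((1 - lam) * A / (3 * B + 4)) ((2 + 3 * B) / (1 - lam))
      ht1 htp hq1 hqt hGt.1 hGt.2 hA hB hlb (by linarith)
      (div_mul_cancel₀ _ hc2d.ne') (by positivity)
      (div_mul_cancel₀ _ hlb.ne') (by positivity)
    have hg0 : 0 < (1 + lam * t ^ ν / W) ^ W - 1 :=
      lt_of_lt_of_le (by positivity) hGt.1
    have hpμ : 0 < t ^ μ := Real.rpow_pos_of_pos ht0 μ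
    have hD : 0 < (1 + t + (1 - lam) * t ^ μ) * ((1 + lam * t ^ ν / W) ^ W - 1) +
        (1 + t) * (1 + (1 - lam) * t ^ μ) := by
      have h1 : 0 < 1 + t + (1 - lam) * t ^ μ := by nlinarith
      have h2 : 0 < 1 + (1 - lam) * t ^ μ := by nlinarith
      nlinarith [mul_pos h1 hg0, mul_pos (show (0:ℝ) < 1 + t by linarith) h2]
    exact ⟨(le_div_iff₀ hD).mpr hcase.1, (div_le_iff₀ hD).mpr hcase.2⟩
  · rw [min_eq_left hm]
    apply aux2 zero_le_one
      (show 0 < (1 - lam) * A / (3 * B + 4) by positivity)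
      (show 0 < (2 + 3 * B) / ((1 - lam) * A) by positivity)
    filter_upwards [hG, eventually_ge_atTop 1] with t hGt ht1
    rw [Real.rpow_one]
    have ht0 : (0:ℝ) < t := lt_of_lt_of_le one_pos ht1
    have htp : t ≤ t ^ μ := by
      calc t = t ^ (1:ℝ) := (Real.rpow_one t).symm
        _ ≤ t ^ μ := Real.rpow_le_rpow_of_exponent_le ht1 hμ
    have hq1 : (1:ℝ) ≤ t ^ (W * ν) := by
      calc (1:ℝ) = t ^ (0:ℝ) := (Real.rpow_zero t).symm
        _ ≤ t ^ (W * ν) := Real.rpow_le_rpow_of_exponent_le ht1 hWν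
    have htq : t ≤ t ^ (W * ν) := by
      calc t = t ^ (1:ℝ) := (Real.rpow_one t).symm
        _ ≤ t ^ (W * ν) := Real.rpow_le_rpow_of_exponent_le ht1 hm
    have hcase := caseB t (t ^ μ) (t ^ (W * ν)) ((1 + lam * t ^ ν / W) ^ W - 1)
      A B (1 - lam) ((1 - lam) * A / (3 * B + 4)) ((2 + 3 * B) / ((1 - lam) * A))
      ht1 htp hq1 htq hGt.1 hGt.2 hA hB hlb (by linarith)
      (div_mul_cancel₀ _ hc2d.ne') (by positivity)
      (div_mul_cancel₀ _ (by positivity : (0:ℝ) < (1 - lam) * A).ne') (by positivity)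
    have hg0 : 0 < (1 + lam * t ^ ν / W) ^ W - 1 :=
      lt_of_lt_of_le (by positivity) hGt.1
    have hpμ : 0 < t ^ μ := Real.rpow_pos_of_pos ht0 μ
    have hD : 0 < (1 + t + (1 - lam) * t ^ μ) * ((1 + lam * t ^ ν / W) ^ W - 1) +
        (1 + t) * (1 + (1 - lam) * t ^ μ) := by
      have h1 : 0 < 1 + t + (1 - lam) * t ^ μ := by nlinarith
      have h2 : 0 < 1 + (1 - lam) * t ^ μ := by nlinarith
      nlinarith [mul_pos h1 hg0, mul_pos (show (0:ℝ) < 1 + t by linarith) h2]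
    exact ⟨(le_div_iff₀ hD).mpr hcase.1, (div_le_iff₀ hD).mpr hcase.2⟩

/-- Asymptotic multiplexing gain of compress-and-cancel in the strong interference
regime: with `SNR1 = SNR2 = t`, `INR = t^μ`, `SNR_side = t^ν`, `μ ≥ 1`, and
`G(t) = (1 + λ·t^ν/W)^W − 1`, the normalized sum-rate converges to
`min{2, 1 + Wν}`. -/
theorem cc_mux_gain_strong (μ ν W lam : ℝ)
    (hμ : 1 ≤ μ) (hW : 0 < W) (hν : 0 ≤ ν)
    (hlam0 : 0 < lam) (hlam1 : lam < 1) :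
    Tendsto
      (fun t : ℝ =>
        (Real.logb 2
            (1 + t * (1 + t + (1 + t + (1 - lam) * t ^ μ) *
                ((1 + lam * t ^ ν / W) ^ W - 1)) /
              ((1 + t + (1 - lam) * t ^ μ) * ((1 + lam * t ^ ν / W) ^ W - 1) +
                (1 + t) * (1 + (1 - lam) * t ^ μ))) +
          Real.logb 2 (1 + (1 - lam) * t)) /
          Real.logb 2 (1 + t))
      atTop (nhds (min 2 (1 + W * ν))) := by
  have hlb : (0:ℝ) < 1 - lam := by linarith
  have h1 := mainX μ ν W lam hμ hW hν hlam0 hlam1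
  have h2 : Tendsto (fun t : ℝ => Real.log (1 + (1 - lam) * t) / Real.log t)
      atTop (nhds 1) :=
    (aux1 hlb zero_le_one).congr fun t => by rw [Real.rpow_one]
  have h3 : Tendsto (fun t : ℝ => Real.log (1 + t) / Real.log t) atTop (nhds 1) :=
    (aux1 one_pos zero_le_one).congr fun t => by rw [Real.rpow_one, one_mul]
  have h4 : Tendsto (fun t : ℝ => Real.log t / Real.log (1 + t)) atTop (nhds 1) := by
    have h := h3.inv₀ one_ne_zero
    rw [inv_one] at h
    exact h.congr fun t => by rw [inv_div]
  have hcomb := (h1.add h2).mul h4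
  have heq : (min 1 (W * ν) + 1) * 1 = min 2 (1 + W * ν) := by
    rcases le_total (W * ν) 1 with h | h
    · rw [min_eq_right h, min_eq_right (by linarith : 1 + W * ν ≤ 2)]; ring
    · rw [min_eq_left h, min_eq_left (by linarith : (2:ℝ) ≤ 1 + W * ν)]; ring
  rw [heq] at hcomb
  refine hcomb.congr' ?_
  filter_upwards [eventually_ge_atTop 2] with t ht
  have ht1 : (1:ℝ) < t := by linarith
  have hlt : Real.log t ≠ 0 := (Real.log_pos ht1).ne'
  have hl1t : Real.log (1 + t) ≠ 0 := (Real.log_pos (by linarith)).ne'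
  have hl2 : Real.log 2 ≠ 0 := (Real.log_pos one_lt_two).ne'
  simp only [Real.logb]
  field_simp
end
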